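/- Let α and β be irrational real numbers such that β = (aα + b)/(cα + d) for some matrix [[a,b],[c,d]] ∈ GL(2,ℤ) with determinant ±1. Then the continued fraction expansions of α and β have the same tail: there exist N, M such that the (N+i)-th partial quotient of α equals the (M+i)-th partial quotient of β for all i ≥ 1. -/

import Mathlib

/-- `a` is the continued fraction expansion of `α` (via the Gauss map):
`a n = ⌊x n⌋` where `x 0 = α` and `x (n+1) = 1/(x n - ⌊x n⌋)`. -/
def IsCFOf (α : ℝ) (a : ℕ → ℤ) : Prop :=
  ∃ x : ℕ → ℝ, x 0 = α ∧ (∀ n, a n = ⌊x n⌋) ∧ ∀ n, x (n + 1) = 1 / (x n - ⌊x n⌋)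

/-- `p n`, `q n` are the convergent numerators/denominators of the continued
fraction with partial quotients `a`, shifted by one: `p (n+1)/q (n+1)` is the
`n`-th convergent `pₙ/qₙ`, and `p 0 = p₋₁ = 1`, `q 0 = q₋₁ = 0`. -/
def IsConvergentsOf (a : ℕ → ℤ) (p q : ℕ → ℤ) : Prop :=
  p 0 = 1 ∧ p 1 = a 0 ∧ (∀ n, p (n + 2) = a (n + 1) * p (n + 1) + p n) ∧
  q 0 = 0 ∧ q 1 = 1 ∧ (∀ n, q (n + 2) = a (n + 1) * q (n + 1) + q n)

/-!
Serret's theorem. If `t` is the `(n+1)`-st complete quotient of `α`, then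
`α = (p (n+1) t + p n) / (q (n+1) t + q n)`, hence `β = (A t + B) / (C t + D)` for an integer
matrix of determinant `±1` with `C = c p (n+1) + d q (n+1)` and `D = c p n + d q n`. Once
`cα + d > 0`, the sum `c p m + d q m = q m (cα + d) + c (p m - α q m)` has a growing first and a
bounded second term, so `0 < D < C` for large `n`. Euclid's algorithm on `(C, D)` then writes
`β = [e₀; e₁, …, eₖ, t]` with `eᵢ ≥ 1` for `i ≥ 1`, so the Gauss map carries `β` to `t` in
`k + 1` steps: the Gauss orbits of `α` and `β` meet.
-/

noncomputable def gaussMap (x : ℝ) : ℝ := (Int.fract x)⁻¹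

theorem floor_add_inv_gaussMap (x : ℝ) : ⌊x⌋ + (gaussMap x)⁻¹ = x := by
  rw [gaussMap, inv_inv, Int.floor_add_fract]

theorem gaussMap_intCast_add_inv (e : ℤ) {t : ℝ} (ht : 1 < t) : gaussMap (e + t⁻¹) = t := by
  rw [gaussMap, Int.fract_intCast_add,
    Int.fract_eq_self.mpr ⟨by positivity, inv_lt_one_of_one_lt₀ ht⟩, inv_inv]

theorem one_lt_intCast_add_inv {e : ℤ} (he : 1 ≤ e) {t : ℝ} (ht : 1 < t) :
    1 < (e + t⁻¹ : ℝ) := by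
  have : (1 : ℝ) ≤ e := by exact_mod_cast he
  have : 0 < t⁻¹ := by positivity
  linarith

theorem Irrational.gaussMap_iterate {x : ℝ} (h : Irrational x) (n : ℕ) :
    Irrational (gaussMap^[n] x) := by
  induction n with
  | zero => exact h
  | succ n ih =>
    rw [Function.iterate_succ_apply', gaussMap, ← Int.self_sub_floor]
    exact (ih.sub_intCast _).inv

theorem one_lt_gaussMap_of_irrational {x : ℝ} (h : Irrational x) : 1 < gaussMap x := by
  have hpos : 0 < Int.fract x :=
    (Int.fract_nonneg x).lt_of_ne' (Int.fract_ne_zero_iff.mpr fun ⟨m, hm⟩ => h.ne_int m hm.symm)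
  exact (one_lt_inv₀ hpos).mpr (Int.fract_lt_one x)

theorem IsCFOf.eq_floor_gaussMap_iterate {α : ℝ} {a : ℕ → ℤ} (h : IsCFOf α a) (n : ℕ) :
    a n = ⌊gaussMap^[n] α⌋ := by
  obtain ⟨x, hx0, hax, hx⟩ := h
  suffices x n = gaussMap^[n] α by rw [hax, this]
  induction n with
  | zero => exact hx0
  | succ n ih =>
    rw [hx, Function.iterate_succ_apply', ← ih, Int.self_sub_floor, one_div, gaussMap]

/-- The two cases are the expansions `[B; C, t]` and `[B - 1; 1, C - 1, t]`. -/
theorem exists_gaussMap_iterate_mobius_eq_of_one (A B C : ℤ)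
    (hdet : A - B * C = 1 ∨ A - B * C = -1) (hC : 1 < C) {t : ℝ} (ht : 1 < t) :
    ∃ k, gaussMap^[k] ((A * t + B) / (C * t + 1)) = t := by
  have ht0 : 0 < t := by linarith
  have hC' : (1 : ℝ) < C := by exact_mod_cast hC
  have hCt : (0 : ℝ) < C * t + 1 := by nlinarith
  rcases hdet with h | h
  · have hval : (A * t + B) / (C * t + 1) = (B : ℝ) + ((C : ℤ) + t⁻¹ : ℝ)⁻¹ := by
      rw [show A = B * C + 1 by linarith]
      field_simp
      push_cast
      ring
    refine ⟨2, ?_⟩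
    rw [hval, Function.iterate_succ_apply,
      gaussMap_intCast_add_inv _ (one_lt_intCast_add_inv hC.le ht), Function.iterate_one,
      gaussMap_intCast_add_inv _ ht]
  · have hu : ((C - 1 : ℤ) : ℝ) + t⁻¹ = ((C - 1) * t + 1) / t := by push_cast; field_simp
    have hu1 : 1 < ((C - 1 : ℤ) : ℝ) + t⁻¹ := one_lt_intCast_add_inv (by omega) ht
    have hupos : 0 < ((C : ℝ) - 1) * t + 1 := by nlinarith
    have hs :
        ((1 : ℤ) : ℝ) + (((C - 1 : ℤ) : ℝ) + t⁻¹)⁻¹ = (C * t + 1) / ((C - 1) * t + 1) := by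
      rw [hu, inv_div, Int.cast_one, one_add_div hupos.ne']
      ring_nf
    have hval : (A * t + B) / (C * t + 1) =
        ((B - 1 : ℤ) : ℝ) + ((1 : ℤ) + (((C - 1 : ℤ) : ℝ) + t⁻¹)⁻¹ : ℝ)⁻¹ := by
      rw [hs, inv_div, show A = B * C - 1 by linarith]
      push_cast
      field_simp
      ring
    refine ⟨3, ?_⟩
    rw [hval, Function.iterate_succ_apply,
      gaussMap_intCast_add_inv _ (one_lt_intCast_add_inv le_rfl (by simpa using hu1)),
      Function.iterate_succ_apply, gaussMap_intCast_add_inv _ hu1, Function.iterate_one,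
      gaussMap_intCast_add_inv _ ht]

/-- Euclid's algorithm on the bottom row: with `C = e D + r`, the matrix `[[A, B], [C, D]]` is
`[[B, A - e B], [D, r]] * [[e, 1], [1, 0]]`, i.e. `t` is replaced by `e + t⁻¹`. -/
theorem exists_gaussMap_iterate_mobius_eq (A B C D : ℤ) (hdet : IsUnit (A * D - B * C))
    (hD : 0 < D) (hDC : D < C) {t : ℝ} (ht : 1 < t) :
    ∃ k, gaussMap^[k] ((A * t + B) / (C * t + D)) = t := by
  rcases eq_or_ne D 1 with rfl | hD1
  · push_cast
    exact exists_gaussMap_iterate_mobius_eq_of_one A B C (by simpa using Int.isUnit_iff.mp hdet)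
      hDC ht
  have hCDe := Int.mul_ediv_add_emod C D
  set e := C / D
  set r := C % D
  have hrD : r < D := Int.emod_lt_of_pos C hD
  have hr : 0 < r := by
    by_contra! hr0
    have : 0 ≤ r := Int.emod_nonneg C hD.ne'
    have hdvd : D ∣ A * D - B * C :=
      dvd_sub (dvd_mul_left D A) (dvd_mul_of_dvd_right ⟨e, by omega⟩ B)
    have := Int.isUnit_iff.mp (isUnit_of_dvd_unit hdvd hdet)
    omega
  have he : 1 ≤ e := Int.le_ediv_of_mul_le hD (by omega)
  have hdet' : IsUnit (B * r - (A - e * B) * D) := by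
    rw [show B * r - (A - e * B) * D = -(A * D - B * C) by rw [← hCDe]; ring]
    exact hdet.neg
  have ht0 : t ≠ 0 := by positivity
  have hval : (A * t + B) / (C * t + D) =
      (B * (e + t⁻¹) + (A - e * B : ℤ)) / (D * (e + t⁻¹) + r) := by
    have hnum : (B * (e + t⁻¹) + (A - e * B : ℤ) : ℝ) = (A * t + B) / t := by
      push_cast; field_simp; ring
    have hden : (D * (e + t⁻¹) + r : ℝ) = (C * t + D) / t := by
      rw [← hCDe]; push_cast; field_simp; ring
    rw [hnum, hden, div_div_div_cancel_right₀ ht0]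
  obtain ⟨k, hk⟩ := exists_gaussMap_iterate_mobius_eq B (A - e * B) D r hdet' hr hrD
    (one_lt_intCast_add_inv he ht)
  refine ⟨k + 1, ?_⟩
  rw [Function.iterate_succ_apply', hval, hk, gaussMap_intCast_add_inv _ ht]
termination_by D.toNat
decreasing_by omega

def cfRecurrence (a : ℕ → ℤ) (u₀ u₁ : ℤ) : ℕ → ℤ
  | 0 => u₀
  | 1 => u₁
  | n + 2 => a (n + 1) * cfRecurrence a u₀ u₁ (n + 1) + cfRecurrence a u₀ u₁ n

theorem exists_isConvergentsOf (a : ℕ → ℤ) : ∃ p q, IsConvergentsOf a p q :=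
  ⟨cfRecurrence a 1 (a 0), cfRecurrence a 0 1, rfl, rfl, fun _ => rfl, rfl, rfl, fun _ => rfl⟩

namespace IsConvergentsOf

variable {a p q : ℕ → ℤ}

theorem det (h : IsConvergentsOf a p q) (n : ℕ) :
    p (n + 1) * q n - p n * q (n + 1) = (-1) ^ (n + 1) := by
  obtain ⟨hp0, hp1, hp, hq0, hq1, hq⟩ := h
  induction n with
  | zero => simp [hp0, hp1, hq0, hq1]
  | succ n ih => rw [hp, hq, pow_succ, ← ih]; ring

theorem q_nonneg_and_one_le_q_succ (h : IsConvergentsOf a p q) (ha : ∀ n, 1 ≤ a (n + 1))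
    (n : ℕ) : 0 ≤ q n ∧ 1 ≤ q (n + 1) := by
  obtain ⟨-, -, -, hq0, hq1, hq⟩ := h
  induction n with
  | zero => exact ⟨hq0.ge, hq1.ge⟩
  | succ n ih => refine ⟨by omega, ?_⟩; rw [hq]; nlinarith [ha n]

theorem q_add_q_succ_le (h : IsConvergentsOf a p q) (ha : ∀ n, 1 ≤ a (n + 1)) (n : ℕ) :
    q n + q (n + 1) ≤ q (n + 2) := by
  rw [h.2.2.2.2.2]
  nlinarith [ha n, h.q_nonneg_and_one_le_q_succ ha n]

theorem le_q_succ (h : IsConvergentsOf a p q) (ha : ∀ n, 1 ≤ a (n + 1)) (n : ℕ) :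
    (n : ℤ) ≤ q (n + 1) := by
  induction n with
  | zero => simpa using (h.q_nonneg_and_one_le_q_succ ha 1).1
  | succ n ih =>
    rcases n with _ | m
    · simpa using (h.q_nonneg_and_one_le_q_succ ha 1).2
    · have hadd : q (m + 1) + q (m + 2) ≤ q (m + 3) := h.q_add_q_succ_le ha (m + 1)
      have := (h.q_nonneg_and_one_le_q_succ ha m).2
      have ih' : (m + 1 : ℤ) ≤ q (m + 2) := by exact_mod_cast ih
      show ((m + 2 : ℕ) : ℤ) ≤ q (m + 3)
      push_cast
      omega

theorem mul_den_eq_num (h : IsConvergentsOf a p q) {x : ℕ → ℝ}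
    (hx : ∀ n, x n = a n + (x (n + 1))⁻¹) (hx0 : ∀ n, x (n + 1) ≠ 0) (n : ℕ) :
    x 0 * (q (n + 1) * x (n + 1) + q n) = p (n + 1) * x (n + 1) + p n := by
  obtain ⟨hp0, hp1, hp, hq0, hq1, hq⟩ := h
  induction n with
  | zero =>
    rw [hx 0, hp0, hp1, hq0, hq1]
    field_simp [hx0 0]
    push_cast
    ring
  | succ n ih =>
    have hstep : a (n + 1) * x (n + 2) + 1 = x (n + 1) * x (n + 2) := by
      rw [hx (n + 1)]
      field_simp [hx0 (n + 1)]
    rw [hp, hq]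
    push_cast
    linear_combination x (n + 2) * ih + (x 0 * q (n + 1) - p (n + 1)) * hstep

theorem abs_sub_mul_le_one (h : IsConvergentsOf a p q) {x : ℕ → ℝ}
    (hx : ∀ n, x n = a n + (x (n + 1))⁻¹) (hx1 : ∀ n, 1 < x (n + 1)) (n : ℕ) :
    |p n - x 0 * q n| ≤ 1 := by
  induction n with
  | zero => simp [h.1, h.2.2.2.1]
  | succ n ih =>
    have hrel := h.mul_den_eq_num hx (fun n => (zero_lt_one.trans (hx1 n)).ne') n
    have hpos : 0 < x (n + 1) := zero_lt_one.trans (hx1 n)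
    have hrec : p (n + 1) - x 0 * q (n + 1) = -(p n - x 0 * q n) / x (n + 1) := by
      field_simp
      linear_combination -hrel
    rw [hrec, abs_div, abs_neg, abs_of_pos hpos]
    exact (div_le_self (abs_nonneg _) (hx1 n).le).trans ih

theorem exists_pos_lt (h : IsConvergentsOf a p q) (ha : ∀ n, 1 ≤ a (n + 1)) {α : ℝ}
    (hE : ∀ n, |p n - α * q n| ≤ 1) {c d : ℤ} (hs : 0 < c * α + d) :
    ∃ n, 0 < c * p n + d * q n ∧ c * p n + d * q n < c * p (n + 1) + d * q (n + 1) := by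
  have hlin : ∀ m, ((c * p m + d * q m : ℤ) : ℝ) = q m * (c * α + d) + c * (p m - α * q m) :=
    fun m => by push_cast; ring
  have herr : ∀ m, |(c : ℝ) * (p m - α * q m)| ≤ |(c : ℝ)| := fun m => by
    rw [abs_mul]; exact mul_le_of_le_one_right (abs_nonneg _) (hE m)
  obtain ⟨K, hK⟩ := exists_nat_gt (2 * |(c : ℝ)| / (c * α + d))
  have hKs : 2 * |(c : ℝ)| < K * (c * α + d) := (div_lt_iff₀ hs).mp hK
  have hqK : (K : ℝ) ≤ q (K + 1) := by exact_mod_cast h.le_q_succ ha K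
  have hqK' : (K + 1 : ℝ) ≤ q (K + 2) := by exact_mod_cast h.le_q_succ ha (K + 1)
  have hgap : (q (K + 1) : ℝ) ≤ q (K + 3) - q (K + 2) := by
    have : q (K + 1) + q (K + 2) ≤ q (K + 3) := h.q_add_q_succ_le ha (K + 1)
    have : (q (K + 1) : ℝ) + q (K + 2) ≤ q (K + 3) := by exact_mod_cast this
    linarith
  have h1 := abs_le.mp (herr (K + 2))
  have h2 := abs_le.mp (herr (K + 3))
  refine ⟨K + 2, ?_, ?_⟩
  · have : (0 : ℝ) < ((c * p (K + 2) + d * q (K + 2) : ℤ) : ℝ) := by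
      rw [hlin]; nlinarith
    exact_mod_cast this
  · have : ((c * p (K + 2) + d * q (K + 2) : ℤ) : ℝ) <
        ((c * p (K + 3) + d * q (K + 3) : ℤ) : ℝ) := by
      rw [hlin, hlin]; nlinarith
    exact_mod_cast this

end IsConvergentsOf

theorem mobius_comp {α t P P' Q Q' : ℝ} (hα : α * (Q * t + Q') = P * t + P')
    (hQ : Q * t + Q' ≠ 0) (a b c d : ℝ) :
    (a * α + b) / (c * α + d) = ((a * P + b * Q) * t + (a * P' + b * Q')) /
      ((c * P + d * Q) * t + (c * P' + d * Q')) := by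
  rw [← mul_div_mul_right _ _ hQ]
  congr 1
  · linear_combination a * hα
  · linear_combination c * hα

theorem exists_gaussMap_iterate_eq_of_pos {α : ℝ} (hα : Irrational α) {a b c d : ℤ}
    (hdet : IsUnit (a * d - b * c)) (hs : 0 < c * α + d) :
    ∃ N M, gaussMap^[N] α = gaussMap^[M] ((a * α + b) / (c * α + d)) := by
  set x : ℕ → ℝ := fun n => gaussMap^[n] α
  have hx1 : ∀ n, 1 < x (n + 1) := fun n => by
    simp only [x, Function.iterate_succ_apply']
    exact one_lt_gaussMap_of_irrational (hα.gaussMap_iterate n)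
  have hx : ∀ n, x n = ⌊x n⌋ + (x (n + 1))⁻¹ := fun n => by
    simp only [x, Function.iterate_succ_apply', floor_add_inv_gaussMap]
  have ha : ∀ n, 1 ≤ ⌊x (n + 1)⌋ := fun n => Int.le_floor.mpr (by exact_mod_cast (hx1 n).le)
  obtain ⟨p, q, hpq⟩ := exists_isConvergentsOf fun n => ⌊x n⌋
  obtain ⟨n, hD, hDC⟩ := hpq.exists_pos_lt ha (hpq.abs_sub_mul_le_one hx hx1) hs
  have hrel := hpq.mul_den_eq_num hx (fun n => (zero_lt_one.trans (hx1 n)).ne') n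
  have hden : 0 < (q (n + 1) : ℝ) * x (n + 1) + q n := by
    obtain ⟨hq0, hq1⟩ := hpq.q_nonneg_and_one_le_q_succ ha n
    have : (0 : ℝ) ≤ q n := by exact_mod_cast hq0
    have : (1 : ℝ) ≤ q (n + 1) := by exact_mod_cast hq1
    nlinarith [hx1 n]
  have hunit : IsUnit ((a * p (n + 1) + b * q (n + 1)) * (c * p n + d * q n) -
      (a * p n + b * q n) * (c * p (n + 1) + d * q (n + 1))) := by
    rw [show _ - _ = (a * d - b * c) * (p (n + 1) * q n - p n * q (n + 1)) by ring, hpq.det]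
    exact hdet.mul (isUnit_one.neg.pow _)
  obtain ⟨k, hk⟩ := exists_gaussMap_iterate_mobius_eq _ _ _ _ hunit hD hDC (hx1 n)
  refine ⟨n + 1, k, ?_⟩
  rw [mobius_comp (α := α) hrel hden.ne']
  push_cast at hk
  exact hk.symm

theorem Irrational.intCast_mul_add_ne_zero {α : ℝ} (hα : Irrational α) {c d : ℤ}
    (hcd : c ≠ 0 ∨ d ≠ 0) : (c : ℝ) * α + d ≠ 0 := by
  rcases eq_or_ne c 0 with rfl | hc
  · simpa using hcd
  · exact ((hα.intCast_mul hc).add_intCast d).ne_zero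

theorem exists_gaussMap_iterate_eq {α : ℝ} (hα : Irrational α) {a b c d : ℤ}
    (hdet : IsUnit (a * d - b * c)) :
    ∃ N M, gaussMap^[N] α = gaussMap^[M] ((a * α + b) / (c * α + d)) := by
  have hcd : c ≠ 0 ∨ d ≠ 0 := by
    by_contra! h
    obtain ⟨rfl, rfl⟩ := h
    simp at hdet
  rcases (hα.intCast_mul_add_ne_zero hcd).lt_or_gt with hneg | hpos
  · have hdet' : IsUnit (-a * -d - -b * -c) := by rwa [neg_mul_neg, neg_mul_neg]
    have hval : (a * α + b) / (c * α + d) =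
        ((-a : ℤ) * α + (-b : ℤ)) / ((-c : ℤ) * α + (-d : ℤ)) := by
      push_cast
      rw [← neg_div_neg_eq]
      ring_nf
    rw [hval]
    exact exists_gaussMap_iterate_eq_of_pos hα hdet' (by push_cast; linarith)
  · exact exists_gaussMap_iterate_eq_of_pos hα hdet hpos

theorem stmt17_general (α β : ℝ) (hα : Irrational α)
    (a b c d : ℤ) (hdet : a * d - b * c = 1 ∨ a * d - b * c = -1)
    (hβα : β = ((a : ℝ) * α + (b : ℝ)) / ((c : ℝ) * α + (d : ℝ)))
    (aα aβ : ℕ → ℤ) (hcfα : IsCFOf α aα) (hcfβ : IsCFOf β aβ) :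
    ∃ N M : ℕ, ∀ i, 1 ≤ i → aα (N + i) = aβ (M + i) := by
  obtain ⟨N, M, h⟩ := exists_gaussMap_iterate_eq hα (Int.isUnit_iff.mpr hdet)
  refine ⟨N, M, fun i _ => ?_⟩
  rw [hcfα.eq_floor_gaussMap_iterate, hcfβ.eq_floor_gaussMap_iterate, add_comm N, add_comm M,
    Function.iterate_add_apply, Function.iterate_add_apply, h, hβα]

/-- if `β = (aα + b)/(cα + d)` with `ad − bc = ±1` (integer
entries), then the continued fraction expansions of the irrational numbers
`α` and `β` have the same tail. -/
theorem stmt17 (α β : ℝ) (hα : Irrational α) (hβ : Irrational β)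
    (a b c d : ℤ) (hdet : a * d - b * c = 1 ∨ a * d - b * c = -1)
    (hβα : β = ((a : ℝ) * α + (b : ℝ)) / ((c : ℝ) * α + (d : ℝ)))
    (aα aβ : ℕ → ℤ) (hcfα : IsCFOf α aα) (hcfβ : IsCFOf β aβ) :
    ∃ N M : ℕ, ∀ i, 1 ≤ i → aα (N + i) = aβ (M + i) :=
  stmt17_general α β hα a b c d hdet hβα aα aβ hcfα hcfβ
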